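/- arXiv:1403.6730 — 3 statements merged into one kernel-verified Lean document; each statement's English description precedes it below -/
import Mathlib

section
/- Any tiling of a 3×n rectangle by T-tetrominoes and monominoes uses at least ⌊n/3⌋ monominoes. -/
/-- The four rotations of the T-tetromino, as sets of cells (row, col). -/
def tShapes : Finset (Finset (ℤ × ℤ)) :=
  { {(0,0),(0,1),(0,2),(1,1)},
    {(0,0),(0,1),(0,2),(-1,1)},
    {(0,0),(1,0),(2,0),(1,1)},
    {(0,0),(1,0),(2,0),(1,-1)} }

/-- A placed T-tetromino: a translate of one of the four rotations. -/
def IsTPlacement (p : Finset (ℤ × ℤ)) : Prop :=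
  ∃ s ∈ tShapes, ∃ t : ℤ × ℤ, p = s.image (· + t)

/-- The m×n rectangle of cells. -/
noncomputable def rectCells (m n : ℕ) : Finset (ℤ × ℤ) :=
  (Finset.Ico 0 (m:ℤ)) ×ˢ (Finset.Ico 0 (n:ℤ))

/-- A tiling of a region `R` by T-tetrominoes and single-cell monominoes. -/
def IsTiling (P : Finset (Finset (ℤ × ℤ))) (R : Finset (ℤ × ℤ)) : Prop :=
  (∀ p ∈ P, IsTPlacement p ∨ ∃ c, p = {c}) ∧
  (∀ p ∈ P, ∀ q ∈ P, p ≠ q → Disjoint p q) ∧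
  P.biUnion id = R

/-- A tiling of a region `R` by T-tetrominoes alone. -/
def IsTTiling (P : Finset (Finset (ℤ × ℤ))) (R : Finset (ℤ × ℤ)) : Prop :=
  (∀ p ∈ P, IsTPlacement p) ∧
  (∀ p ∈ P, ∀ q ∈ P, p ≠ q → Disjoint p q) ∧
  P.biUnion id = R

/-- The number of monominoes (single-cell pieces) used in a tiling. -/
def monoCount (P : Finset (Finset (ℤ × ℤ))) : ℕ :=
  (P.filter (fun p => p.card = 1)).card

/-- The gap number `M(m,n)`: the least number of monominoes in a tiling of the
m×n rectangle by T-tetrominoes and monominoes. -/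
noncomputable def gapNumber (m n : ℕ) : ℕ :=
  sInf {g | ∃ P, IsTiling P (rectCells m n) ∧ monoCount P = g}


/-! Every 3×3 square of a tiling of a 3×n rectangle contains a monomino: an exhaustive search,
checked by `decide`, shows that disjoint T-tetrominoes lying in a strip of height 3 cannot
cover such a square. The ⌊n/3⌋ disjoint squares on columns `3k, 3k+1, 3k+2` therefore contain
⌊n/3⌋ distinct monominoes. -/

lemma IsTPlacement.image_add {p : Finset (ℤ × ℤ)} (hp : IsTPlacement p) (v : ℤ × ℤ) :
    IsTPlacement (p.image (· + v)) := by
  obtain ⟨s, hs, t, rfl⟩ := hp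
  refine ⟨s, hs, t + v, ?_⟩
  simp only [Finset.image_image, Function.comp_def, add_assoc]

def tPlacementsThrough (x : ℤ × ℤ) : Finset (Finset (ℤ × ℤ)) :=
  tShapes.biUnion fun s => s.image fun c => s.image (· + (x - c))

lemma mem_tPlacementsThrough {p : Finset (ℤ × ℤ)} {x : ℤ × ℤ} (hp : IsTPlacement p)
    (hx : x ∈ p) : p ∈ tPlacementsThrough x := by
  obtain ⟨s, hs, t, rfl⟩ := hp
  obtain ⟨c, hc, rfl⟩ := Finset.mem_image.1 hx
  simp only [tPlacementsThrough, Finset.mem_biUnion, Finset.mem_image]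
  exact ⟨s, hs, c, hc, by simp⟩

def InStrip (p : Finset (ℤ × ℤ)) : Prop :=
  ∀ c ∈ p, 0 ≤ c.1 ∧ c.1 < 3

instance : DecidablePred InStrip := fun p => inferInstanceAs (Decidable (∀ c ∈ p, _))

/-- Backtracking search: can the cells of `todo` be covered by pairwise disjoint T-placements in
the strip, disjoint from the pieces already `placed`? -/
def canCover : List (ℤ × ℤ) → List (Finset (ℤ × ℤ)) → Bool
  | [], _ => true
  | x :: xs, placed =>
    if placed.any (x ∈ ·) then canCover xs placed
    else decide (∃ q ∈ tPlacementsThrough x,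
      InStrip q ∧ (∀ p ∈ placed, Disjoint p q) ∧ canCover xs (q :: placed) = true)

lemma canCover_of_subset_biUnion (Q : Finset (Finset (ℤ × ℤ)))
    (hQ : ∀ q ∈ Q, IsTPlacement q ∧ InStrip q)
    (hdisj : ∀ p ∈ Q, ∀ q ∈ Q, p ≠ q → Disjoint p q) :
    ∀ (todo : List (ℤ × ℤ)) (placed : List (Finset (ℤ × ℤ))),
      (∀ x ∈ todo, x ∈ Q.biUnion id) → (∀ p ∈ placed, p ∈ Q) → canCover todo placed = true
  | [], _, _, _ => rfl
  | x :: xs, placed, hcover, hplaced => by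
    have hxs : ∀ y ∈ xs, y ∈ Q.biUnion id := fun y hy => hcover y (List.mem_cons_of_mem x hy)
    rw [canCover]
    split_ifs with hx
    · exact canCover_of_subset_biUnion Q hQ hdisj xs placed hxs hplaced
    · obtain ⟨q, hq, hxq⟩ := Finset.mem_biUnion.1 (hcover x List.mem_cons_self)
      refine decide_eq_true ⟨q, mem_tPlacementsThrough (hQ q hq).1 hxq, (hQ q hq).2, ?_, ?_⟩
      · intro p hp
        refine hdisj p (hplaced p hp) q hq ?_
        rintro rfl
        exact hx (List.any_eq_true.2 ⟨p, hp, decide_eq_true hxq⟩)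
      · refine canCover_of_subset_biUnion Q hQ hdisj xs (q :: placed) hxs ?_
        simpa [hq] using hplaced

theorem rectCells_three_three_not_subset_biUnion (Q : Finset (Finset (ℤ × ℤ)))
    (hQ : ∀ q ∈ Q, IsTPlacement q ∧ InStrip q)
    (hdisj : ∀ p ∈ Q, ∀ q ∈ Q, p ≠ q → Disjoint p q) :
    ¬ rectCells 3 3 ⊆ Q.biUnion id := by
  intro hsub
  suffices canCover [(0,0),(0,1),(0,2),(1,0),(1,1),(1,2),(2,0),(2,1),(2,2)] [] = true from
    absurd this (by decide)
  refine canCover_of_subset_biUnion Q hQ hdisj _ [] (fun x hx => hsub ?_) (by simp)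
  simp only [List.mem_cons, List.not_mem_nil, or_false] at hx
  rcases hx with rfl | rfl | rfl | rfl | rfl | rfl | rfl | rfl | rfl <;> decide

theorem IsTiling.exists_singleton_mem_of_three_columns {n : ℕ} {P : Finset (Finset (ℤ × ℤ))}
    (hP : IsTiling P (rectCells 3 n)) {a : ℤ} (ha : 0 ≤ a) (han : a + 3 ≤ n) :
    ∃ c : ℤ × ℤ, {c} ∈ P ∧ a ≤ c.2 ∧ c.2 < a + 3 := by
  classical
  obtain ⟨hpieces, hdisj, hcover⟩ := hP
  by_contra! hmono
  -- Shifted left by `a`, the T-pieces of `P` cover the square `rectCells 3 3`.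
  let shift : Finset (ℤ × ℤ) → Finset (ℤ × ℤ) := Finset.image (· + (0, -a))
  have hshift_inj : Function.Injective (· + ((0 : ℤ), -a)) := add_left_injective _
  refine rectCells_three_three_not_subset_biUnion ((P.filter IsTPlacement).image shift) ?_ ?_ ?_
  · simp only [Finset.mem_image, Finset.mem_filter]
    rintro _ ⟨p, ⟨hp, hpT⟩, rfl⟩
    refine ⟨hpT.image_add _, ?_⟩
    intro c hc
    obtain ⟨d, hd, rfl⟩ := Finset.mem_image.1 hc
    have hdR : d ∈ rectCells 3 n := hcover ▸ Finset.mem_biUnion.2 ⟨p, hp, hd⟩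
    simp only [rectCells, Finset.mem_product, Finset.mem_Ico] at hdR
    simp only [Prod.fst_add, add_zero]
    omega
  · simp only [Finset.mem_image, Finset.mem_filter]
    rintro _ ⟨p, ⟨hp, -⟩, rfl⟩ _ ⟨q, ⟨hq, -⟩, rfl⟩ hne
    exact (Finset.disjoint_image hshift_inj).2 (hdisj p hp q hq fun h => hne (h ▸ rfl))
  · intro x hx
    have hxR : (x.1, x.2 + a) ∈ rectCells 3 n := by
      simp only [rectCells, Finset.mem_product, Finset.mem_Ico] at hx ⊢
      omega
    obtain ⟨p, hp, hxp⟩ := Finset.mem_biUnion.1 (hcover ▸ hxR)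
    have hpT : IsTPlacement p := by
      refine (hpieces p hp).resolve_right ?_
      rintro ⟨c, rfl⟩
      obtain rfl := Finset.mem_singleton.1 hxp
      simp only [rectCells, Finset.mem_product, Finset.mem_Ico] at hx
      have := hmono _ hp
      omega
    refine Finset.mem_biUnion.2 ⟨shift p, Finset.mem_image_of_mem _ ?_, ?_⟩
    · exact Finset.mem_filter.2 ⟨hp, hpT⟩
    · exact Finset.mem_image.2 ⟨_, hxp, by ext <;> simp⟩

/-- Any tiling of a 3×n rectangle uses at least ⌊n/3⌋ monominoes. -/
theorem width3_lower_bound (n : ℕ) (P : Finset (Finset (ℤ × ℤ)))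
    (hP : IsTiling P (rectCells 3 n)) :
    n / 3 ≤ monoCount P := by
  have hblock : ∀ k : Fin (n / 3), ∃ c : ℤ × ℤ, {c} ∈ P ∧ 3 * (k : ℤ) ≤ c.2 ∧ c.2 < 3 * k + 3 :=
    fun k => hP.exists_singleton_mem_of_three_columns (by positivity) (by have := k.2; omega)
  choose c hcP hc_lo hc_hi using hblock
  calc n / 3 = (Finset.univ : Finset (Fin (n / 3))).card := by simp
    _ ≤ monoCount P := by
      refine Finset.card_le_card_of_injOn (fun k => {c k}) (fun k _ => ?_) fun k _ l _ hkl => ?_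
      · simpa [monoCount] using hcP k
      · have hck := Finset.singleton_injective hkl
        have := hc_lo k; have := hc_hi k; have := hc_lo l; have := hc_hi l
        rw [hck] at *
        ext; omega
end

section
/- For every n ≥ 2 with n ≡ 0 (mod 3) and n ≠ 3, there exists a tiling of the 3×n rectangle by T-tetrominoes and monominoes using exactly n/3 monominoes. -/
/-!
A 3×6 rectangle can be tiled by four T-tetrominoes and two monominoes, and a 3×9 rectangle by six
T-tetrominoes and three monominoes. Placing copies of the 3×6 tiling next to the empty tiling or
next to the 3×9 tiling covers every 3×3k rectangle with k ≠ 1 using exactly k monominoes.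
-/

open Finset

namespace IsTiling

variable {P Q : Finset (Finset (ℤ × ℤ))} {R S : Finset (ℤ × ℤ)}

lemma nonempty_of_mem (hP : IsTiling P R) {p : Finset (ℤ × ℤ)} (hp : p ∈ P) : p.Nonempty := by
  rcases hP.1 p hp with ⟨s, hs, t, rfl⟩ | ⟨c, rfl⟩
  · have hzero : ∀ s ∈ tShapes, ((0 : ℤ), (0 : ℤ)) ∈ s := by decide
    exact ⟨(0, 0) + t, mem_image_of_mem _ (hzero s hs)⟩
  · exact singleton_nonempty c

lemma subset_of_mem (hP : IsTiling P R) {p : Finset (ℤ × ℤ)} (hp : p ∈ P) : p ⊆ R :=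
  hP.2.2 ▸ subset_biUnion_of_mem id hp

lemma disjoint_pieces (hP : IsTiling P R) (hQ : IsTiling Q S) (hRS : Disjoint R S) :
    Disjoint P Q :=
  disjoint_left.2 fun p hpP hpQ =>
    (hP.nonempty_of_mem hpP).ne_empty <|
      (disjoint_self_iff_empty p).1 (hRS.mono (hP.subset_of_mem hpP) (hQ.subset_of_mem hpQ))

lemma union (hP : IsTiling P R) (hQ : IsTiling Q S) (hRS : Disjoint R S) :
    IsTiling (P ∪ Q) (R ∪ S) := by
  have hcross : ∀ p ∈ P, ∀ q ∈ Q, Disjoint p q := fun p hp q hq =>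
    hRS.mono (hP.subset_of_mem hp) (hQ.subset_of_mem hq)
  refine ⟨fun p hp => (mem_union.1 hp).elim (hP.1 p) (hQ.1 p), ?_, ?_⟩
  · intro p hp q hq hne
    rcases mem_union.1 hp with hp | hp <;> rcases mem_union.1 hq with hq | hq
    · exact hP.2.1 p hp q hq hne
    · exact hcross p hp q hq
    · exact (hcross q hq p hp).symm
    · exact hQ.2.1 p hp q hq hne
  · rw [union_biUnion, hP.2.2, hQ.2.2]

lemma image_add (hP : IsTiling P R) (t : ℤ × ℤ) :
    IsTiling (P.image (·.image (· + t))) (R.image (· + t)) := by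
  refine ⟨?_, ?_, ?_⟩
  · simp only [mem_image, forall_exists_index, and_imp, forall_apply_eq_imp_iff₂]
    intro q hq
    rcases hP.1 q hq with ⟨s, hs, u, rfl⟩ | ⟨c, rfl⟩
    · exact Or.inl ⟨s, hs, u + t, by simp only [image_image, Function.comp_def, add_assoc]⟩
    · exact Or.inr ⟨c + t, image_singleton _ _⟩
  · simp only [mem_image, forall_exists_index, and_imp, forall_apply_eq_imp_iff₂]
    intro p hp q hq hne
    exact (disjoint_image (add_left_injective t)).2 (hP.2.1 p hp q hq fun h => hne (h ▸ rfl))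
  · rw [image_biUnion, ← hP.2.2, biUnion_image]
    rfl

end IsTiling

lemma monoCount_union {P Q : Finset (Finset (ℤ × ℤ))} (h : Disjoint P Q) :
    monoCount (P ∪ Q) = monoCount P + monoCount Q := by
  rw [monoCount, filter_union, card_union_of_disjoint (disjoint_filter_filter h)]
  rfl

lemma monoCount_image_add (P : Finset (Finset (ℤ × ℤ))) (t : ℤ × ℤ) :
    monoCount (P.image (·.image (· + t))) = monoCount P := by
  have hcard (p : Finset (ℤ × ℤ)) : (p.image (· + t)).card = p.card :=
    card_image_of_injective p (add_left_injective t)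
  rw [monoCount, filter_image, card_image_of_injective _ (image_injective (add_left_injective t))]
  simp only [hcard]
  rfl

lemma rectCells_add (m a b : ℕ) :
    rectCells m (a + b) = rectCells m a ∪ (rectCells m b).image (· + (0, (a : ℤ))) := by
  ext ⟨r, c⟩
  simp only [rectCells, mem_union, mem_image, mem_product, mem_Ico, Prod.exists, Prod.mk_add_mk,
    Prod.mk.injEq, add_zero]
  constructor
  · rintro ⟨hr, hc⟩
    by_cases h : c < a
    · exact Or.inl ⟨hr, hc.1, h⟩
    · exact Or.inr ⟨r, c - a, ⟨hr, by omega, by omega⟩, rfl, by ring⟩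
  · rintro (⟨hr, hc⟩ | ⟨r, c, ⟨hr, hc⟩, rfl, rfl⟩) <;> exact ⟨hr, by omega, by omega⟩

lemma disjoint_rectCells_image_add (m a b : ℕ) :
    Disjoint (rectCells m a) ((rectCells m b).image (· + (0, (a : ℤ)))) := by
  rw [disjoint_left]
  rintro ⟨r, c⟩ h1 h2
  simp only [rectCells, mem_image, mem_product, mem_Ico, Prod.exists, Prod.mk_add_mk,
    Prod.mk.injEq] at h1 h2
  omega

lemma IsTiling.exists_append {m a b : ℕ} {P Q : Finset (Finset (ℤ × ℤ))}
    (hP : IsTiling P (rectCells m a)) (hQ : IsTiling Q (rectCells m b)) :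
    ∃ T, IsTiling T (rectCells m (a + b)) ∧ monoCount T = monoCount P + monoCount Q := by
  have hQ' := hQ.image_add (0, (a : ℤ))
  refine ⟨P ∪ Q.image (·.image (· + (0, (a : ℤ)))), ?_, ?_⟩
  · rw [rectCells_add]
    exact hP.union hQ' (disjoint_rectCells_image_add m a b)
  · rw [monoCount_union (hP.disjoint_pieces hQ' (disjoint_rectCells_image_add m a b)),
      monoCount_image_add]

lemma isTiling_empty_rectCells_zero (m : ℕ) : IsTiling ∅ (rectCells m 0) := by
  refine ⟨by simp, by simp, ?_⟩
  simp [rectCells]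

def tiling3x6 : Finset (Finset (ℤ × ℤ)) :=
  { {(0,0),(1,0),(2,0),(1,1)},
    {(0,1),(0,2),(0,3),(1,2)},
    {(0,4)},
    {(0,5),(1,5),(2,5),(1,4)},
    {(2,2),(2,3),(2,4),(1,3)},
    {(2,1)} }

def tiling3x9 : Finset (Finset (ℤ × ℤ)) :=
  { {(0,0),(1,0),(2,0),(1,1)},
    {(0,1),(0,2),(0,3),(1,2)},
    {(0,4),(0,5),(0,6),(1,5)},
    {(0,7)},
    {(0,8),(1,8),(2,8),(1,7)},
    {(2,2),(2,3),(2,4),(1,3)},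
    {(1,4)},
    {(2,5),(2,6),(2,7),(1,6)},
    {(2,1)} }

lemma isTiling_tiling3x6 : IsTiling tiling3x6 (rectCells 3 6) := by
  refine ⟨?_, by decide, by decide⟩
  intro p hp
  simp only [tiling3x6, mem_insert, mem_singleton] at hp
  rcases hp with rfl | rfl | rfl | rfl | rfl | rfl
  · exact Or.inl ⟨{(0,0),(1,0),(2,0),(1,1)}, by decide, (0, 0), by decide⟩
  · exact Or.inl ⟨{(0,0),(0,1),(0,2),(1,1)}, by decide, (0, 1), by decide⟩
  · exact Or.inr ⟨(0, 4), rfl⟩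
  · exact Or.inl ⟨{(0,0),(1,0),(2,0),(1,-1)}, by decide, (0, 5), by decide⟩
  · exact Or.inl ⟨{(0,0),(0,1),(0,2),(-1,1)}, by decide, (2, 2), by decide⟩
  · exact Or.inr ⟨(2, 1), rfl⟩

lemma isTiling_tiling3x9 : IsTiling tiling3x9 (rectCells 3 9) := by
  refine ⟨?_, by decide, by decide⟩
  intro p hp
  simp only [tiling3x9, mem_insert, mem_singleton] at hp
  rcases hp with rfl | rfl | rfl | rfl | rfl | rfl | rfl | rfl | rfl
  · exact Or.inl ⟨{(0,0),(1,0),(2,0),(1,1)}, by decide, (0, 0), by decide⟩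
  · exact Or.inl ⟨{(0,0),(0,1),(0,2),(1,1)}, by decide, (0, 1), by decide⟩
  · exact Or.inl ⟨{(0,0),(0,1),(0,2),(1,1)}, by decide, (0, 4), by decide⟩
  · exact Or.inr ⟨(0, 7), rfl⟩
  · exact Or.inl ⟨{(0,0),(1,0),(2,0),(1,-1)}, by decide, (0, 8), by decide⟩
  · exact Or.inl ⟨{(0,0),(0,1),(0,2),(-1,1)}, by decide, (2, 2), by decide⟩
  · exact Or.inr ⟨(1, 4), rfl⟩
  · exact Or.inl ⟨{(0,0),(0,1),(0,2),(-1,1)}, by decide, (2, 5), by decide⟩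
  · exact Or.inr ⟨(2, 1), rfl⟩

lemma exists_tiling_rectCells_three_mul :
    ∀ k : ℕ, k ≠ 1 → ∃ P, IsTiling P (rectCells 3 (3 * k)) ∧ monoCount P = k
  | 0, _ => ⟨∅, isTiling_empty_rectCells_zero 3, rfl⟩
  | 1, h => (h rfl).elim
  | 2, _ => ⟨tiling3x6, isTiling_tiling3x6, by decide⟩
  | 3, _ => ⟨tiling3x9, isTiling_tiling3x9, by decide⟩
  | k + 4, _ => by
    obtain ⟨P, hP, hPk⟩ := exists_tiling_rectCells_three_mul (k + 2) (by omega)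
    obtain ⟨T, hT, hTk⟩ := hP.exists_append isTiling_tiling3x6
    refine ⟨T, by rwa [show 3 * (k + 4) = 3 * (k + 2) + 6 by ring], ?_⟩
    rw [hTk, hPk, show monoCount tiling3x6 = 2 by decide]

theorem width3_upper_bound_general (n : ℕ) (h3 : n % 3 = 0) (hne : n ≠ 3) :
    ∃ P : Finset (Finset (ℤ × ℤ)),
      IsTiling P (rectCells 3 n) ∧ monoCount P = n / 3 := by
  have hn : n = 3 * (n / 3) := by omega
  rw [hn] at hne ⊢
  rw [Nat.mul_div_cancel_left _ (by norm_num)]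
  exact exists_tiling_rectCells_three_mul (n / 3) (by omega)

/-- For n ≥ 2, n ≡ 0 (mod 3), n ≠ 3, the 3×n rectangle has a tiling with
exactly n/3 monominoes. -/
theorem width3_upper_bound (n : ℕ) (hn : 2 ≤ n) (h3 : n % 3 = 0) (hne : n ≠ 3) :
    ∃ P : Finset (Finset (ℤ × ℤ)),
      IsTiling P (rectCells 3 n) ∧ monoCount P = n / 3 :=
  width3_upper_bound_general n h3 hne
end

section
/- For every k ≥ 1, M(2, 2k+1) = 2: every tiling of a 2×(2k+1) rectangle by T-tetrominoes and monominoes uses at least 2 monominoes, and there is a tiling using exactly 2. -/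
/-!
Every piece has area `4` or `1` and the rectangle has area `4k + 2`, so the number of
monominoes is `≡ 2 (mod 4)`, hence at least `2`. Conversely, `k` T-tetrominoes placed
alternately upright and upside down along the strip cover everything except one cell in
each end column, and those two cells are filled by monominoes.
-/

lemma IsTPlacement.card_eq {p : Finset (ℤ × ℤ)} (h : IsTPlacement p) : p.card = 4 := by
  obtain ⟨s, hs, t, rfl⟩ := h
  rw [Finset.card_image_of_injective _ (add_left_injective t)]
  fin_cases hs <;> decide

lemma rectCells_card (m n : ℕ) : (rectCells m n).card = m * n := by
  simp [rectCells, Finset.card_product]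

section Tiling

variable {P : Finset (Finset (ℤ × ℤ))} {R : Finset (ℤ × ℤ)} {p : Finset (ℤ × ℤ)}

lemma IsTiling.subset (h : IsTiling P R) (hp : p ∈ P) : p ⊆ R := by
  rw [← h.2.2]
  exact Finset.subset_biUnion_of_mem id hp

lemma IsTiling.insert (h : IsTiling P R) (hp : IsTPlacement p ∨ ∃ c, p = {c})
    (hpR : Disjoint p R) : IsTiling (insert p P) (p ∪ R) := by
  have hsep : ∀ q ∈ P, Disjoint p q := fun q hq => hpR.mono_right (h.subset hq)
  obtain ⟨hshape, hdisj, hunion⟩ := h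
  refine ⟨?_, ?_, by rw [Finset.biUnion_insert, hunion]; rfl⟩
  · simp only [Finset.mem_insert, forall_eq_or_imp]
    exact ⟨hp, hshape⟩
  · simp only [Finset.mem_insert]
    rintro q (rfl | hq) q' (rfl | hq') hne
    · exact absurd rfl hne
    · exact hsep q' hq'
    · exact (hsep q hq).symm
    · exact hdisj q hq q' hq' hne

lemma IsTiling.card_eq (h : IsTiling P R) :
    R.card = 4 * (P.filter (fun p => p.card ≠ 1)).card + monoCount P := by
  obtain ⟨hshape, hdisj, hunion⟩ := h
  have hT : ∀ q ∈ P.filter (fun p => p.card ≠ 1), q.card = 4 := by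
    intro q hq
    obtain ⟨hqP, hq1⟩ := Finset.mem_filter.mp hq
    rcases hshape q hqP with hqT | ⟨c, rfl⟩
    · exact hqT.card_eq
    · exact absurd (Finset.card_singleton c) hq1
  have hmono : ∀ q ∈ P.filter (fun p => p.card = 1), q.card = 1 := fun q hq =>
    (Finset.mem_filter.mp hq).2
  rw [← hunion, Finset.card_biUnion (t := id) hdisj]
  simp only [id]
  rw [← Finset.sum_filter_not_add_sum_filter P (fun p => p.card = 1) (fun p => p.card),
    Finset.sum_const_nat hT, Finset.sum_const_nat hmono, monoCount]
  ring

end Tiling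

lemma monoCount_insert_le (P : Finset (Finset (ℤ × ℤ))) (p : Finset (ℤ × ℤ)) :
    monoCount (insert p P) ≤ monoCount P + 1 := by
  unfold monoCount
  rw [Finset.filter_insert]
  split_ifs
  · exact Finset.card_insert_le _ _
  · exact Nat.le_succ _

lemma monoCount_insert_of_card_ne_one (P : Finset (Finset (ℤ × ℤ))) {p : Finset (ℤ × ℤ)}
    (hp : p.card ≠ 1) : monoCount (insert p P) = monoCount P := by
  rw [monoCount, Finset.filter_insert, if_neg hp, monoCount]

lemma gapNumber_le {m n : ℕ} {P : Finset (Finset (ℤ × ℤ))} (h : IsTiling P (rectCells m n)) :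
    gapNumber m n ≤ monoCount P :=
  Nat.sInf_le ⟨P, h, rfl⟩

lemma le_gapNumber {m n g : ℕ} (hex : ∃ P, IsTiling P (rectCells m n))
    (hle : ∀ P, IsTiling P (rectCells m n) → g ≤ monoCount P) : g ≤ gapNumber m n := by
  obtain ⟨P, hP⟩ := hex
  refine le_csInf ⟨_, P, hP, rfl⟩ ?_
  rintro _ ⟨Q, hQ, rfl⟩
  exact hle Q hQ

def tPiece (r c : ℤ) : Finset (ℤ × ℤ) := {(r, c), (r, c + 1), (r, c + 2), (1 - r, c + 1)}

lemma isTPlacement_tPiece (n c : ℕ) : IsTPlacement (tPiece (n % 2 : ℕ) c) := by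
  rcases Nat.mod_two_eq_zero_or_one n with h | h <;> rw [h]
  · refine ⟨{(0, 0), (0, 1), (0, 2), (1, 1)}, by decide, (0, c), ?_⟩
    ext ⟨a, b⟩; simp [tPiece, Prod.ext_iff]; omega
  · refine ⟨{(0, 0), (0, 1), (0, 2), (-1, 1)}, by decide, (1, c), ?_⟩
    ext ⟨a, b⟩; simp [tPiece, Prod.ext_iff]; omega

def tStrip : ℕ → Finset (Finset (ℤ × ℤ))
  | 0 => ∅
  | j + 1 => insert (tPiece (j % 2 : ℕ) (2 * j : ℕ)) (tStrip j)

def stripEnd (k : ℕ) : ℤ × ℤ := ((k % 2 : ℕ), 2 * (k : ℤ))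

lemma isTiling_tStrip (k : ℕ) :
    IsTiling (tStrip k) (rectCells 2 (2 * k + 1) \ {(1, 0), stripEnd k}) := by
  induction k with
  | zero =>
    refine ⟨by simp [tStrip], by simp [tStrip], ?_⟩
    ext ⟨a, b⟩; simp [tStrip, stripEnd, rectCells]; omega
  | succ k ih =>
    have hnew : Disjoint (tPiece (k % 2 : ℕ) (2 * k : ℕ))
        (rectCells 2 (2 * k + 1) \ {(1, 0), stripEnd k}) := by
      rw [Finset.disjoint_left]
      rintro ⟨a, b⟩ hx hxR
      simp [tPiece, stripEnd, rectCells, Prod.ext_iff] at hx hxR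
      omega
    rw [tStrip]
    convert ih.insert (Or.inl (isTPlacement_tPiece k (2 * k))) hnew using 1
    ext ⟨a, b⟩; simp [tPiece, stripEnd, rectCells, Prod.ext_iff]; omega

lemma monoCount_tStrip (k : ℕ) : monoCount (tStrip k) = 0 := by
  induction k with
  | zero => rfl
  | succ k ih =>
    have hcard := (isTPlacement_tPiece k (2 * k)).card_eq
    rw [tStrip, monoCount_insert_of_card_ne_one _ (by omega), ih]

lemma exists_isTiling_two_odd (k : ℕ) :
    ∃ P, IsTiling P (rectCells 2 (2 * k + 1)) ∧ monoCount P ≤ 2 := by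
  refine ⟨insert {(1, 0)} (insert {stripEnd k} (tStrip k)), ?_, ?_⟩
  · have hend := (isTiling_tStrip k).insert (Or.inr ⟨stripEnd k, rfl⟩) (by simp)
    convert hend.insert (Or.inr ⟨(1, 0), rfl⟩) (by simp [stripEnd, Prod.ext_iff]; omega) using 1
    ext ⟨a, b⟩; simp [stripEnd, rectCells, Prod.ext_iff]; omega
  · have h₁ := monoCount_insert_le (insert {stripEnd k} (tStrip k)) {(1, 0)}
    have h₂ := monoCount_insert_le (tStrip k) {stripEnd k}
    have h₀ := monoCount_tStrip k
    omega

theorem gapNumber_two_odd_general (k : ℕ) :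
    gapNumber 2 (2 * k + 1) = 2 := by
  obtain ⟨P, hP, hmono⟩ := exists_isTiling_two_odd k
  refine le_antisymm ((gapNumber_le hP).trans hmono) (le_gapNumber ⟨P, hP⟩ fun Q hQ => ?_)
  have harea := hQ.card_eq
  rw [rectCells_card] at harea
  omega

/-- M(2, 2k+1) = 2 for all k ≥ 1. -/
theorem gapNumber_two_odd (k : ℕ) (hk : 1 ≤ k) :
    gapNumber 2 (2 * k + 1) = 2 :=
  gapNumber_two_odd_general k
end
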